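/- For all positive integers n with n ≥ 6, one has A_n < 2 log(n − 1). -/

import Mathlib

open Finset Real

/-- `p n` is the `n`-th prime number, with `p 1 = 2`, `p 2 = 3`, `p 3 = 5`, ... -/
noncomputable def p (n : ℕ) : ℕ := Nat.nth Nat.Prime (n - 1)

/-- `A k = (p (k+1) - 2) / k`, the arithmetic mean of the first `k` prime gaps. -/
noncomputable def A (k : ℕ) : ℝ := ((p (k + 1) : ℝ) - 2) / k

/-! ### A kernel-computable prime counter -/

def tdiv : ℕ → ℕ → ℕ → Bool
  | 0, _, _ => true
  | fuel+1, d, n => if n < d*d then true else if n % d = 0 then false else tdiv fuel (d+2) n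

def isP (n : ℕ) : Bool :=
  if n < 2 then false else if n = 2 then true else if n % 2 = 0 then false else tdiv n 3 n

def cntR : ℕ → ℕ → ℕ → ℕ
  | 0, _, _ => 0
  | fuel+1, lo, len =>
    if len = 0 then 0
    else if len = 1 then (if isP lo then 1 else 0)
    else cntR fuel lo (len/2) + cntR fuel (lo + len/2) (len - len/2)

lemma prime_of_no_small_divisor {n d : ℕ} (h2 : 2 ≤ n) (hlt : n < d*d)
    (hdiv : ∀ e, 2 ≤ e → e < d → ¬ e ∣ n) : Nat.Prime n := by
  by_contra hp
  have hsq := Nat.minFac_sq_le_self (by omega : 0 < n) hp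
  have hmf : n.minFac ∣ n := Nat.minFac_dvd n
  have h2m : 2 ≤ n.minFac := (Nat.minFac_prime (by omega : n ≠ 1)).two_le
  have hd : d ≤ n.minFac := not_lt.1 fun hh => hdiv _ h2m hh hmf
  rw [pow_two] at hsq
  have := Nat.mul_le_mul hd hd
  omega

lemma tdiv_sound : ∀ (f d n : ℕ), tdiv f d n = true → n % 2 = 1 → 2 ≤ n → 3 ≤ d → d % 2 = 1 →
    (∀ e, 2 ≤ e → e < d → ¬ e ∣ n) → n < d*d + 2*f → Nat.Prime n := by
  intro f
  induction f with
  | zero =>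
    intro d n _ _ h2 _ _ hdiv hlt
    exact prime_of_no_small_divisor h2 (by omega) hdiv
  | succ f ih =>
    intro d n ht hodd h2 hd3 hdo hdiv hlt
    rw [tdiv] at ht
    by_cases hc : n < d*d
    · exact prime_of_no_small_divisor h2 hc hdiv
    · rw [if_neg hc] at ht
      by_cases hm : n % d = 0
      · rw [if_pos hm] at ht; exact absurd ht (by simp)
      · rw [if_neg hm] at ht
        refine ih (d+2) n ht hodd h2 (by omega) (by omega) ?_ (by nlinarith)
        intro e h2e helt hedvd
        rcases Nat.lt_or_ge e d with he | he
        · exact hdiv e h2e he hedvd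
        · rcases (by omega : e = d ∨ e = d + 1) with he' | he'
          · exact hm (Nat.dvd_iff_mod_eq_zero.1 (he' ▸ hedvd))
          · have h2e' : 2 ∣ e := by omega
            have h2n : 2 ∣ n := h2e'.trans hedvd
            omega

lemma isP_sound {n : ℕ} (h : isP n = true) : Nat.Prime n := by
  unfold isP at h
  split_ifs at h with h1 h2 h3
  · exact h2 ▸ Nat.prime_two
  · refine tdiv_sound n 3 n h (by omega) (by omega) le_rfl rfl ?_ (by omega)
    intro e h2e helt hedvd
    have : e = 2 := by omega
    subst this
    omega

lemma cntR_le : ∀ (f lo len : ℕ), cntR f lo len ≤ #((Finset.Ico lo (lo+len)).filter Nat.Prime) := by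
  intro f
  induction f with
  | zero => intro lo len; simp [cntR]
  | succ f ih =>
    intro lo len
    rw [cntR]
    by_cases h0 : len = 0
    · simp [h0]
    · rw [if_neg h0]
      by_cases h1 : len = 1
      · rw [if_pos h1]
        by_cases hp : isP lo
        · rw [if_pos hp]
          have : lo ∈ (Finset.Ico lo (lo+len)).filter Nat.Prime := by
            simp [Finset.mem_filter, isP_sound hp]; omega
          exact Finset.card_pos.2 ⟨lo, this⟩
        · simp [hp]
      · rw [if_neg h1]
        have hmid1 : lo ≤ lo + len/2 := Nat.le_add_right _ _
        have hmid2 : lo + len/2 ≤ lo + len := by omega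
        rw [← Finset.Ico_union_Ico_eq_Ico hmid1 hmid2, Finset.filter_union,
          Finset.card_union_of_disjoint
            (Finset.disjoint_filter_filter (Finset.Ico_disjoint_Ico_consecutive _ _ _))]
        have h2 := ih (lo + len/2) (len - len/2)
        rw [show lo + len/2 + (len - len/2) = lo + len by omega] at h2
        exact Nat.add_le_add (ih lo (len/2)) h2

lemma count_ge_add (M len f : ℕ) :
    Nat.count Nat.Prime M + cntR f M len ≤ Nat.count Nat.Prime (M + len) := by
  rw [Nat.count_eq_card_filter_range, Nat.count_eq_card_filter_range, Finset.range_eq_Ico, Finset.range_eq_Ico,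
    ← Finset.Ico_union_Ico_eq_Ico (Nat.zero_le M) (Nat.le_add_right M len),
    Finset.filter_union,
    Finset.card_union_of_disjoint
      (Finset.disjoint_filter_filter (Finset.Ico_disjoint_Ico_consecutive _ _ _))]
  exact Nat.add_le_add le_rfl (cntR_le f M len)


lemma cnt1 : 7 ≤ Nat.count Nat.Prime 18 := by
  set_option maxRecDepth 100000 in
  set_option maxHeartbeats 4000000 in
  have hd : cntR 20 0 18 = 7 := by decide
  have h := count_ge_add 0 18 20
  norm_num [hd] at h
  simpa using h

lemma cnt2 : 8 ≤ Nat.count Nat.Prime 20 := by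
  set_option maxRecDepth 100000 in
  set_option maxHeartbeats 4000000 in
  have hd : cntR 20 18 2 = 1 := by decide
  have h := count_ge_add 18 2 20
  norm_num [hd] at h
  have := cnt1
  omega

lemma cnt3 : 9 ≤ Nat.count Nat.Prime 24 := by
  set_option maxRecDepth 100000 in
  set_option maxHeartbeats 4000000 in
  have hd : cntR 20 20 4 = 1 := by decide
  have h := count_ge_add 20 4 20
  norm_num [hd] at h
  have := cnt2
  omega

lemma cnt4 : 12 ≤ Nat.count Nat.Prime 38 := by
  set_option maxRecDepth 100000 in
  set_option maxHeartbeats 4000000 in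
  have hd : cntR 20 24 14 = 3 := by decide
  have h := count_ge_add 24 14 20
  norm_num [hd] at h
  have := cnt3
  omega

lemma cnt5 : 15 ≤ Nat.count Nat.Prime 48 := by
  set_option maxRecDepth 100000 in
  set_option maxHeartbeats 4000000 in
  have hd : cntR 20 38 10 = 3 := by decide
  have h := count_ge_add 38 10 20
  norm_num [hd] at h
  have := cnt4
  omega

lemma cnt6 : 18 ≤ Nat.count Nat.Prime 62 := by
  set_option maxRecDepth 100000 in
  set_option maxHeartbeats 4000000 in
  have hd : cntR 20 48 14 = 3 := by decide
  have h := count_ge_add 48 14 20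
  norm_num [hd] at h
  have := cnt5
  omega

lemma cnt7 : 26 ≤ Nat.count Nat.Prime 102 := by
  set_option maxRecDepth 100000 in
  set_option maxHeartbeats 4000000 in
  have hd : cntR 20 62 40 = 8 := by decide
  have h := count_ge_add 62 40 20
  norm_num [hd] at h
  have := cnt6
  omega

lemma cnt8 : 34 ≤ Nat.count Nat.Prime 140 := by
  set_option maxRecDepth 100000 in
  set_option maxHeartbeats 4000000 in
  have hd : cntR 20 102 38 = 8 := by decide
  have h := count_ge_add 102 38 20
  norm_num [hd] at h
  have := cnt7
  omega

lemma cnt9 : 51 ≤ Nat.count Nat.Prime 234 := by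
  set_option maxRecDepth 100000 in
  set_option maxHeartbeats 4000000 in
  have hd : cntR 20 140 94 = 17 := by decide
  have h := count_ge_add 140 94 20
  norm_num [hd] at h
  have := cnt8
  omega

lemma cnt10 : 71 ≤ Nat.count Nat.Prime 354 := by
  set_option maxRecDepth 100000 in
  set_option maxHeartbeats 4000000 in
  have hd : cntR 20 234 120 = 20 := by decide
  have h := count_ge_add 234 120 20
  norm_num [hd] at h
  have := cnt9
  omega

lemma cnt11 : 107 ≤ Nat.count Nat.Prime 588 := by
  set_option maxRecDepth 100000 in
  set_option maxHeartbeats 4000000 in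
  have hd : cntR 20 354 234 = 36 := by decide
  have h := count_ge_add 354 234 20
  norm_num [hd] at h
  have := cnt10
  omega

lemma cnt12 : 154 ≤ Nat.count Nat.Prime 888 := by
  set_option maxRecDepth 100000 in
  set_option maxHeartbeats 4000000 in
  have hd : cntR 20 588 300 = 47 := by decide
  have h := count_ge_add 588 300 20
  norm_num [hd] at h
  have := cnt11
  omega

lemma cnt13 : 238 ≤ Nat.count Nat.Prime 1494 := by
  set_option maxRecDepth 100000 in
  set_option maxHeartbeats 4000000 in
  have hd : cntR 20 888 606 = 84 := by decide
  have h := count_ge_add 888 606 20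
  norm_num [hd] at h
  have := cnt12
  omega

lemma cnt14 : 344 ≤ Nat.count Nat.Prime 2312 := by
  set_option maxRecDepth 100000 in
  set_option maxHeartbeats 4000000 in
  have hd : cntR 20 1494 818 = 106 := by decide
  have h := count_ge_add 1494 818 20
  norm_num [hd] at h
  have := cnt13
  omega

lemma cnt15 : 529 ≤ Nat.count Nat.Prime 3804 := by
  set_option maxRecDepth 100000 in
  set_option maxHeartbeats 4000000 in
  have hd : cntR 20 2312 1492 = 185 := by decide
  have h := count_ge_add 2312 1492 20
  norm_num [hd] at h
  have := cnt14
  omega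

lemma cnt16 : 853 ≤ Nat.count Nat.Prime 6600 := by
  set_option maxRecDepth 100000 in
  set_option maxHeartbeats 4000000 in
  have hd : cntR 20 3804 2796 = 324 := by decide
  have h := count_ge_add 3804 2796 20
  norm_num [hd] at h
  have := cnt15
  omega

lemma cnt17 : 1025 ≤ Nat.count Nat.Prime 8168 := by
  set_option maxRecDepth 100000 in
  set_option maxHeartbeats 4000000 in
  have hd : cntR 20 6600 1568 = 172 := by decide
  have h := count_ge_add 6600 1568 20
  norm_num [hd] at h
  have := cnt16
  omega

lemma nthb1 : Nat.nth Nat.Prime 6 ≤ 17 := by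
  have h := Nat.nth_lt_of_lt_count (p := Nat.Prime) (n := 18) (k := 6) (by have := cnt1; omega)
  omega

lemma nthb2 : Nat.nth Nat.Prime 7 ≤ 19 := by
  have h := Nat.nth_lt_of_lt_count (p := Nat.Prime) (n := 20) (k := 7) (by have := cnt2; omega)
  omega

lemma nthb3 : Nat.nth Nat.Prime 8 ≤ 23 := by
  have h := Nat.nth_lt_of_lt_count (p := Nat.Prime) (n := 24) (k := 8) (by have := cnt3; omega)
  omega

lemma nthb4 : Nat.nth Nat.Prime 11 ≤ 37 := by
  have h := Nat.nth_lt_of_lt_count (p := Nat.Prime) (n := 38) (k := 11) (by have := cnt4; omega)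
  omega

lemma nthb5 : Nat.nth Nat.Prime 14 ≤ 47 := by
  have h := Nat.nth_lt_of_lt_count (p := Nat.Prime) (n := 48) (k := 14) (by have := cnt5; omega)
  omega

lemma nthb6 : Nat.nth Nat.Prime 17 ≤ 61 := by
  have h := Nat.nth_lt_of_lt_count (p := Nat.Prime) (n := 62) (k := 17) (by have := cnt6; omega)
  omega

lemma nthb7 : Nat.nth Nat.Prime 25 ≤ 101 := by
  have h := Nat.nth_lt_of_lt_count (p := Nat.Prime) (n := 102) (k := 25) (by have := cnt7; omega)
  omega

lemma nthb8 : Nat.nth Nat.Prime 33 ≤ 139 := by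
  have h := Nat.nth_lt_of_lt_count (p := Nat.Prime) (n := 140) (k := 33) (by have := cnt8; omega)
  omega

lemma nthb9 : Nat.nth Nat.Prime 50 ≤ 233 := by
  have h := Nat.nth_lt_of_lt_count (p := Nat.Prime) (n := 234) (k := 50) (by have := cnt9; omega)
  omega

lemma nthb10 : Nat.nth Nat.Prime 70 ≤ 353 := by
  have h := Nat.nth_lt_of_lt_count (p := Nat.Prime) (n := 354) (k := 70) (by have := cnt10; omega)
  omega

lemma nthb11 : Nat.nth Nat.Prime 106 ≤ 587 := by
  have h := Nat.nth_lt_of_lt_count (p := Nat.Prime) (n := 588) (k := 106) (by have := cnt11; omega)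
  omega

lemma nthb12 : Nat.nth Nat.Prime 153 ≤ 887 := by
  have h := Nat.nth_lt_of_lt_count (p := Nat.Prime) (n := 888) (k := 153) (by have := cnt12; omega)
  omega

lemma nthb13 : Nat.nth Nat.Prime 237 ≤ 1493 := by
  have h := Nat.nth_lt_of_lt_count (p := Nat.Prime) (n := 1494) (k := 237) (by have := cnt13; omega)
  omega

lemma nthb14 : Nat.nth Nat.Prime 343 ≤ 2311 := by
  have h := Nat.nth_lt_of_lt_count (p := Nat.Prime) (n := 2312) (k := 343) (by have := cnt14; omega)
  omega

lemma nthb15 : Nat.nth Nat.Prime 528 ≤ 3803 := by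
  have h := Nat.nth_lt_of_lt_count (p := Nat.Prime) (n := 3804) (k := 528) (by have := cnt15; omega)
  omega

lemma nthb16 : Nat.nth Nat.Prime 852 ≤ 6599 := by
  have h := Nat.nth_lt_of_lt_count (p := Nat.Prime) (n := 6600) (k := 852) (by have := cnt16; omega)
  omega

lemma nthb17 : Nat.nth Nat.Prime 1024 ≤ 8167 := by
  have h := Nat.nth_lt_of_lt_count (p := Nat.Prime) (n := 8168) (k := 1024) (by have := cnt17; omega)
  omega

lemma small_case {a b k P n : ℕ} (hnth : Nat.nth Nat.Prime b ≤ P)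
    (hP : (P:ℝ) ≤ 2*a*k*0.6931471803 + 2) (hk : 2^k + 1 ≤ a) (hk1 : 1 ≤ k)
    (hn1 : a ≤ n) (hn2 : n ≤ b) : A n < 2 * Real.log ((n : ℝ) - 1) := by
  have hA : A n = ((Nat.nth Nat.Prime n : ℝ) - 2) / n := by simp [A, p]
  have hmono : Nat.nth Nat.Prime n ≤ Nat.nth Nat.Prime b :=
    (Nat.nth_le_nth Nat.infinite_setOf_prime).2 hn2
  have hnthn : (Nat.nth Nat.Prime n : ℝ) ≤ P := by exact_mod_cast le_trans hmono hnth
  have hcast : ((2^k + 1 : ℕ) : ℝ) ≤ (n : ℝ) := Nat.cast_le.2 (hk.trans hn1)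
  have h2k : (2:ℝ)^k ≤ (n:ℝ) - 1 := by push_cast at hcast; linarith
  have hlog2k : Real.log ((2:ℝ)^k) ≤ Real.log ((n:ℝ) - 1) :=
    Real.log_le_log (by positivity) h2k
  rw [Real.log_pow] at hlog2k
  have hl2 : (0.6931471803:ℝ) < Real.log 2 := Real.log_two_gt_d9
  have hk1' : (1:ℝ) ≤ (k:ℝ) := by exact_mod_cast hk1
  have han : (a:ℝ) ≤ (n:ℝ) := Nat.cast_le.2 hn1
  have hn0 : (0:ℝ) < (n:ℝ) := by
    have h1n : (1:ℕ) ≤ n := le_trans (le_trans (Nat.le_add_left 1 (2^k)) hk) hn1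
    exact_mod_cast h1n
  have hkpos : (0:ℝ) < (k:ℝ) := by linarith
  have hP' : (Nat.nth Nat.Prime n : ℝ) ≤ 2*(a:ℝ)*(k:ℝ)*0.6931471803 + 2 := le_trans hnthn hP
  have h_a : (0:ℝ) ≤ ((n:ℝ)-(a:ℝ)) * ((k:ℝ)*0.6931471803) :=
    mul_nonneg (by linarith) (by positivity)
  have h_b : (0:ℝ) < (n:ℝ)*((k:ℝ)*(Real.log 2 - 0.6931471803)) :=
    mul_pos hn0 (mul_pos hkpos (by linarith))
  have h_c : (0:ℝ) ≤ (n:ℝ)*(Real.log ((n:ℝ)-1) - (k:ℝ)*Real.log 2) :=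
    mul_nonneg hn0.le (by linarith)
  rw [hA, div_lt_iff₀ hn0]
  linarith [h_a, h_b, h_c, hP']

/-! ### Numeric exponential bounds -/

lemma expE : (13.8838:ℝ) ≤ Real.exp (0.3849 * 6.931471803) := by
  have e1 : (2.7182818283:ℝ) ≤ Real.exp 1 := Real.exp_one_gt_d9.le
  have e2 : (1 + (0.3849*6.931471803 - 2)/64 : ℝ) ≤ Real.exp ((0.3849*6.931471803 - 2)/64) := by
    have := Real.add_one_le_exp ((0.3849*6.931471803 - 2)/64); linarith
  have h1 : (2.7182818283:ℝ)^2 * (1 + (0.3849*6.931471803 - 2)/64)^64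
      ≤ (Real.exp 1)^2 * (Real.exp ((0.3849*6.931471803 - 2)/64))^64 := by
    apply mul_le_mul (pow_le_pow_left₀ (by norm_num) e1 2)
      (pow_le_pow_left₀ (by norm_num) e2 64) (by positivity) (by positivity)
  have h2 : (Real.exp 1)^2 * (Real.exp ((0.3849*6.931471803 - 2)/64))^64
      = Real.exp (0.3849 * 6.931471803) := by
    rw [← Real.exp_nat_mul, ← Real.exp_nat_mul, ← Real.exp_add]
    norm_num
  have h3 : (13.8838:ℝ) ≤ (2.7182818283:ℝ)^2 * (1 + (0.3849*6.931471803 - 2)/64)^64 := by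
    norm_num
  linarith

lemma key_exp {t : ℝ} (ht : (6.931471803:ℝ) ≤ t) : 2.003 * t ≤ Real.exp (0.3849 * t) := by
  have hE := expE
  have h1 : Real.exp (0.3849 * t)
      = Real.exp (0.3849*6.931471803) * Real.exp (0.3849*(t - 6.931471803)) := by
    rw [← Real.exp_add]; ring_nf
  have h2 : 1 + 0.3849*(t-6.931471803) ≤ Real.exp (0.3849*(t-6.931471803)) := by
    have := Real.add_one_le_exp (0.3849*(t-6.931471803)); linarith
  have h3 : (0:ℝ) ≤ 0.3849*(t-6.931471803) := by linarith
  have h4 : (13.8838:ℝ) * (1 + 0.3849*(t-6.931471803))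
      ≤ Real.exp (0.3849*6.931471803) * (1 + 0.3849*(t-6.931471803)) :=
    mul_le_mul_of_nonneg_right hE (by linarith)
  have h5 : Real.exp (0.3849*6.931471803) * (1 + 0.3849*(t-6.931471803))
      ≤ Real.exp (0.3849*6.931471803) * Real.exp (0.3849*(t-6.931471803)) :=
    mul_le_mul_of_nonneg_left h2 (Real.exp_pos _).le
  rw [h1]
  linarith

/-! ### Chebyshev-type bound -/

lemma centralBinom_le_pow (m : ℕ) (hm : 0 < m) :
    Nat.centralBinom m ≤ (2*m)^(Nat.count Nat.Prime (2*m+1)) := by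
  have h0 : Nat.centralBinom m ≠ 0 := (Nat.centralBinom_pos m).ne'
  have hcb : Nat.centralBinom m = (2*m).choose m := rfl
  conv_lhs => rw [← Nat.factorization_prod_pow_eq_self h0]
  rw [Finsupp.prod]
  have hsub : (Nat.centralBinom m).factorization.support
      ⊆ (Finset.range (2*m+1)).filter Nat.Prime := by
    intro q hq
    have hqp : q.Prime := Nat.prime_of_mem_primeFactors (by rwa [← Nat.support_factorization])
    have hνpos : (Nat.centralBinom m).factorization q ≠ 0 := Finsupp.mem_support_iff.1 hq
    have hle : q ^ ((Nat.centralBinom m).factorization q) ≤ 2*m := by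
      rw [hcb]; exact Nat.pow_factorization_choose_le (by omega)
    have : q ≤ q ^ ((Nat.centralBinom m).factorization q) :=
      Nat.le_self_pow hνpos q
    simp only [Finset.mem_filter, Finset.mem_range]
    exact ⟨by omega, hqp⟩
  calc ∏ q ∈ (Nat.centralBinom m).factorization.support,
        q ^ ((Nat.centralBinom m).factorization q)
      ≤ ∏ _q ∈ (Nat.centralBinom m).factorization.support, (2*m) := by
        apply Finset.prod_le_prod' 
        intro q hq
        rw [hcb]; exact Nat.pow_factorization_choose_le (by omega)
    _ = (2*m) ^ (Nat.centralBinom m).factorization.support.card := Finset.prod_const _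
    _ ≤ (2*m) ^ (Nat.count Nat.Prime (2*m+1)) := by
        apply Nat.pow_le_pow_right (by omega)
        rw [Nat.count_eq_card_filter_range]
        exact Finset.card_le_card hsub

lemma asympt {n : ℕ} (hn : 1025 ≤ n) : A n < 2 * Real.log ((n : ℝ) - 1) := by
  have hA : A n = ((Nat.nth Nat.Prime n : ℝ) - 2) / n := by simp [A, p]
  set t := Real.log ((n:ℝ) - 1) with htdef
  have hcn : (1025:ℝ) ≤ (n:ℝ) := by exact_mod_cast hn
  have hx : (1024:ℝ) ≤ (n:ℝ) - 1 := by linarith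
  have hl2 : (0.6931471803:ℝ) < Real.log 2 := Real.log_two_gt_d9
  have hlog1024 : Real.log (1024:ℝ) ≤ t := Real.log_le_log (by norm_num) hx
  have h1024 : Real.log (1024:ℝ) = 10 * Real.log 2 := by
    rw [show (1024:ℝ) = 2^(10:ℕ) by norm_num, Real.log_pow]; norm_num
  have ht1 : (6.931471803:ℝ) < t := by rw [h1024] at hlog1024; linarith
  have htpos : (0:ℝ) < t := by linarith
  set m := ⌈(n:ℝ) * t⌉₊ with hmdef
  have hm1 : (n:ℝ)*t ≤ (m:ℝ) := Nat.le_ceil _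
  have hm2 : (m:ℝ) < (n:ℝ)*t + 1 := Nat.ceil_lt_add_one (by positivity)
  have hm4 : 4 ≤ m := by
    have hnt : (1025:ℝ)*6.931471803 ≤ (n:ℝ)*t :=
      mul_le_mul hcn ht1.le (by norm_num) (by linarith)
    have h4 : (4:ℝ) ≤ (m:ℝ) := by linarith
    exact_mod_cast h4
  have hkey := key_exp ht1.le
  have hexp_t : Real.exp t = (n:ℝ) - 1 := Real.exp_log (by linarith)
  have hebt : 2*(n:ℝ)*t + 2 ≤ Real.exp (1.3849 * t) := by
    have hsplit : Real.exp (1.3849*t) = ((n:ℝ)-1) * Real.exp (0.3849*t) := by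
      rw [← hexp_t, ← Real.exp_add]; ring_nf
    have hmul : ((n:ℝ)-1) * (2.003*t) ≤ ((n:ℝ)-1) * Real.exp (0.3849*t) :=
      mul_le_mul_of_nonneg_left hkey (by linarith)
    rw [hsplit]
    have hnt : (1025:ℝ)*t ≤ (n:ℝ)*t := mul_le_mul_of_nonneg_right hcn htpos.le
    linarith
  have h2mle : (2*m:ℝ) ≤ 2*(n:ℝ)*t + 2 := by push_cast; linarith
  have hcount : n < Nat.count Nat.Prime (2*m+1) := by
    by_contra hc
    push_neg at hc
    have h4m : 4^m < (2*m)^(n+1) := by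
      calc 4^m < m * Nat.centralBinom m := Nat.four_pow_lt_mul_centralBinom m hm4
        _ ≤ m * (2*m)^(Nat.count Nat.Prime (2*m+1)) :=
            Nat.mul_le_mul_left m (centralBinom_le_pow m (by omega))
        _ ≤ (2*m) * (2*m)^n :=
            Nat.mul_le_mul (by omega) (Nat.pow_le_pow_right (by omega) hc)
        _ = (2*m)^(n+1) := by rw [pow_succ]; ring
    have h4m' : ((4:ℝ))^m < ((2*m:ℝ))^(n+1) := by exact_mod_cast h4m
    have hlog : (m:ℝ) * Real.log 4 < ((n:ℝ)+1) * Real.log (2*m) := by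
      have := Real.log_lt_log (by positivity) h4m'
      rw [Real.log_pow, Real.log_pow] at this
      push_cast at this ⊢
      linarith
    have hlog2m : Real.log (2*(m:ℝ)) ≤ 1.3849 * t := by
      have h2mpos : (0:ℝ) < 2*(m:ℝ) := by positivity
      have := Real.log_le_log h2mpos (le_trans h2mle hebt)
      rwa [Real.log_exp] at this
    have hlog4 : Real.log (4:ℝ) = 2 * Real.log 2 := by
      rw [show (4:ℝ) = 2^(2:ℕ) by norm_num, Real.log_pow]; norm_num
    -- chain : m log 4 < (n+1) log(2m) ≤ (n+1)·1.3849 t ≤ 2 log 2 · n · t ≤ 2 log 2 · m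
    have hstep1 : ((n:ℝ)+1) * Real.log (2*m) ≤ ((n:ℝ)+1) * (1.3849 * t) := by
      apply mul_le_mul_of_nonneg_left hlog2m (by linarith)
    have hstep2 : ((n:ℝ)+1) * (1.3849 * t) ≤ (2 * Real.log 2) * ((n:ℝ) * t) := by
      have hco : 1.3849 * ((n:ℝ)+1) ≤ (2 * Real.log 2) * (n:ℝ) := by
        have hh : (1.3862943606:ℝ)*(n:ℝ) ≤ (2*Real.log 2)*(n:ℝ) :=
          mul_le_mul_of_nonneg_right (by linarith) (by linarith)
        linarith
      calc ((n:ℝ)+1) * (1.3849 * t) = (1.3849 * ((n:ℝ)+1)) * t := by ring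
        _ ≤ ((2*Real.log 2)*(n:ℝ)) * t := mul_le_mul_of_nonneg_right hco htpos.le
        _ = (2*Real.log 2) * ((n:ℝ)*t) := by ring
    have hstep3 : (2 * Real.log 2) * ((n:ℝ) * t) ≤ (2 * Real.log 2) * (m:ℝ) := by
      apply mul_le_mul_of_nonneg_left hm1 (by linarith)
    rw [hlog4] at hlog
    linarith
  have hnth : Nat.nth Nat.Prime n ≤ 2*m := by
    have := Nat.nth_lt_of_lt_count hcount
    omega
  have hnth' : (Nat.nth Nat.Prime n : ℝ) ≤ 2*(m:ℝ) := by exact_mod_cast hnth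
  have hn0 : (0:ℝ) < (n:ℝ) := by linarith
  rw [hA, div_lt_iff₀ hn0]
  linarith

theorem stmt_4 (n : ℕ) (hn : 6 ≤ n) : A n < 2 * Real.log ((n : ℝ) - 1) := by
  rcases Nat.lt_or_ge n 1025 with hsm | hlg
  swap
  · exact asympt hlg
  · have h6 := hn
    rcases Nat.lt_or_ge n 7 with hu | hl0 
    · exact small_case (a:=6) (b:=6) (k:=2) (P:=17) nthb1 (by norm_num) (by norm_num) (by norm_num) (by omega) (by omega)
    rcases Nat.lt_or_ge n 8 with hu | hl1 
    · exact small_case (a:=7) (b:=7) (k:=2) (P:=19) nthb2 (by norm_num) (by norm_num) (by norm_num) (by omega) (by omega)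
    rcases Nat.lt_or_ge n 9 with hu | hl2 
    · exact small_case (a:=8) (b:=8) (k:=2) (P:=23) nthb3 (by norm_num) (by norm_num) (by norm_num) (by omega) (by omega)
    rcases Nat.lt_or_ge n 12 with hu | hl3 
    · exact small_case (a:=9) (b:=11) (k:=3) (P:=37) nthb4 (by norm_num) (by norm_num) (by norm_num) (by omega) (by omega)
    rcases Nat.lt_or_ge n 15 with hu | hl4 
    · exact small_case (a:=12) (b:=14) (k:=3) (P:=47) nthb5 (by norm_num) (by norm_num) (by norm_num) (by omega) (by omega)
    rcases Nat.lt_or_ge n 18 with hu | hl5 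
    · exact small_case (a:=15) (b:=17) (k:=3) (P:=61) nthb6 (by norm_num) (by norm_num) (by norm_num) (by omega) (by omega)
    rcases Nat.lt_or_ge n 26 with hu | hl6 
    · exact small_case (a:=18) (b:=25) (k:=4) (P:=101) nthb7 (by norm_num) (by norm_num) (by norm_num) (by omega) (by omega)
    rcases Nat.lt_or_ge n 34 with hu | hl7 
    · exact small_case (a:=26) (b:=33) (k:=4) (P:=139) nthb8 (by norm_num) (by norm_num) (by norm_num) (by omega) (by omega)
    rcases Nat.lt_or_ge n 51 with hu | hl8 
    · exact small_case (a:=34) (b:=50) (k:=5) (P:=233) nthb9 (by norm_num) (by norm_num) (by norm_num) (by omega) (by omega)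
    rcases Nat.lt_or_ge n 71 with hu | hl9 
    · exact small_case (a:=51) (b:=70) (k:=5) (P:=353) nthb10 (by norm_num) (by norm_num) (by norm_num) (by omega) (by omega)
    rcases Nat.lt_or_ge n 107 with hu | hl10 
    · exact small_case (a:=71) (b:=106) (k:=6) (P:=587) nthb11 (by norm_num) (by norm_num) (by norm_num) (by omega) (by omega)
    rcases Nat.lt_or_ge n 154 with hu | hl11 
    · exact small_case (a:=107) (b:=153) (k:=6) (P:=887) nthb12 (by norm_num) (by norm_num) (by norm_num) (by omega) (by omega)
    rcases Nat.lt_or_ge n 238 with hu | hl12 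
    · exact small_case (a:=154) (b:=237) (k:=7) (P:=1493) nthb13 (by norm_num) (by norm_num) (by norm_num) (by omega) (by omega)
    rcases Nat.lt_or_ge n 344 with hu | hl13 
    · exact small_case (a:=238) (b:=343) (k:=7) (P:=2311) nthb14 (by norm_num) (by norm_num) (by norm_num) (by omega) (by omega)
    rcases Nat.lt_or_ge n 529 with hu | hl14 
    · exact small_case (a:=344) (b:=528) (k:=8) (P:=3803) nthb15 (by norm_num) (by norm_num) (by norm_num) (by omega) (by omega)
    rcases Nat.lt_or_ge n 853 with hu | hl15 
    · exact small_case (a:=529) (b:=852) (k:=9) (P:=6599) nthb16 (by norm_num) (by norm_num) (by norm_num) (by omega) (by omega)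
    rcases Nat.lt_or_ge n 1025 with hu | hl16 
    · exact small_case (a:=853) (b:=1024) (k:=9) (P:=8167) nthb17 (by norm_num) (by norm_num) (by norm_num) (by omega) (by omega)
    exact absurd hsm (by omega)
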